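/- arXiv:1102.4595 — 2 statements merged into one kernel-verified Lean document; each statement's English description precedes it below -/
import Mathlib

section
/- Let $\Delta$ be a root system with positive roots $\Delta_+$ and simple roots $\Pi$. For $\alpha \in \Delta_+$, let $s(\alpha)$ be the number of unordered representations of $\alpha$ as a sum of two positive roots, and let $\mathrm{Supp}(\alpha) \subset \Pi$ be the set of simple roots occurring with positive coefficient in $\alpha$. Then $s(\alpha) \ge |\mathrm{Supp}(\alpha)| - 1$. -/
open scoped InnerProductSpace

/-- A reduced crystallographic root system in a Euclidean space `V`, together with a chosen
base of simple roots and the (integer) coordinates of each root in this base. -/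
structure RootSystemData (V : Type) [NormedAddCommGroup V] [InnerProductSpace ℝ V] where
  /-- the set of roots -/
  roots : Set V
  /-- the set of simple roots (the base) -/
  simples : Finset V
  finite : roots.Finite
  ne_zero : ∀ α ∈ roots, α ≠ (0 : V)
  neg_mem : ∀ α ∈ roots, -α ∈ roots
  reduced : ∀ α ∈ roots, (2 : ℝ) • α ∉ roots
  reflect_mem : ∀ α ∈ roots, ∀ β ∈ roots,
    β - (2 * ⟪α, β⟫_ℝ / ⟪α, α⟫_ℝ) • α ∈ roots
  cartan_int : ∀ α ∈ roots, ∀ β ∈ roots, ∃ n : ℤ,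
    2 * ⟪α, β⟫_ℝ / ⟪α, α⟫_ℝ = (n : ℝ)
  simples_mem : ∀ γ ∈ simples, γ ∈ roots
  simples_indep : LinearIndependent ℝ (fun γ : simples => (γ : V))
  /-- `coeff α γ` is the coefficient of the simple root `γ` in the root `α` -/
  coeff : V → V → ℤ
  coeff_spec : ∀ α ∈ roots, α = ∑ γ ∈ simples, coeff α γ • γ
  coeff_sign : ∀ α ∈ roots,
    (∀ γ ∈ simples, 0 ≤ coeff α γ) ∨ (∀ γ ∈ simples, coeff α γ ≤ 0)

namespace RootSystemData

variable {V : Type} [NormedAddCommGroup V] [InnerProductSpace ℝ V]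

/-- The set of positive roots with respect to the base. -/
def pos (R : RootSystemData V) : Set V :=
  {α ∈ R.roots | ∀ γ ∈ R.simples, 0 ≤ R.coeff α γ}

/-- The support of a root: the simple roots occurring in it with nonzero coefficient. -/
def Supp (R : RootSystemData V) (α : V) : Finset V :=
  R.simples.filter fun γ => R.coeff α γ ≠ 0

/-- The height of a root: the sum of its coefficients over the simple roots. -/
def height (R : RootSystemData V) (α : V) : ℤ :=
  ∑ γ ∈ R.simples, R.coeff α γ

/-- `s(α)`: the number of unordered representations of `α` as a sum of two positive
roots. -/
noncomputable def numDecomp (R : RootSystemData V) (α : V) : ℕ :=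
  {z : Sym2 V | ∃ β ∈ R.pos, ∃ γ ∈ R.pos, z = Sym2.mk β γ ∧ β + γ = α}.ncard

end RootSystemData

/-!
Induction on the height of `α`. When `|Supp α| ≥ 2`, some simple root `γ` has positive
coefficient in `α` and `0 < ⟪γ, α⟫`, so `α - γ` is a positive root and `α' = s_γ α` is a positive
root of smaller height. Since `s_γ` permutes the positive roots other than `γ`, it maps the
decompositions of `α'` avoiding `γ` injectively to those of `α` avoiding `γ`; besides these, `α`
has the decomposition `γ + (α - γ)` and `α'` at most one involving `γ`. The supports of `α` and
`α'` agree off `γ`, and `γ` leaves the support only when its coefficient in `α'` vanishes, in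
which case no decomposition of `α'` involves `γ`. Hence `|Supp α| - s(α) ≤ |Supp α'| - s(α')`.
-/

open Finset

theorem Submodule.reflection_orthogonalComplement_singleton_apply {V : Type*}
    [NormedAddCommGroup V] [InnerProductSpace ℝ V] (γ x : V) :
    (ℝ ∙ γ)ᗮ.reflection x = x - (2 * ⟪γ, x⟫_ℝ / ⟪γ, γ⟫_ℝ) • γ := by
  rw [reflection_orthogonal_apply, reflection_singleton_apply, real_inner_self_eq_norm_sq,
    neg_sub, two_smul ℕ, ← add_smul]
  simp only [RCLike.ofReal_real_eq_id, id]
  ring_nf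

namespace RootSystemData

variable {V : Type} [NormedAddCommGroup V] [InnerProductSpace ℝ V] (R : RootSystemData V)

theorem coeff_eq_of_eq_sum {α : V} (hα : α ∈ R.roots) {c : V → ℤ}
    (h : α = ∑ γ ∈ R.simples, c γ • γ) {γ : V} (hγ : γ ∈ R.simples) :
    R.coeff α γ = c γ := by
  have hsum : ∑ γ : R.simples, (R.coeff α γ - c γ) • (γ : V) = 0 := by
    simp only [sub_smul, sum_sub_distrib]
    rw [sum_coe_sort R.simples (fun γ => R.coeff α γ • γ),
      sum_coe_sort R.simples (fun γ => c γ • γ), ← h, ← R.coeff_spec α hα, sub_self]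
  have := linearIndependent_iff'.mp (R.simples_indep.restrict_scalars' ℤ) univ _ hsum ⟨γ, hγ⟩
    (mem_univ _)
  exact sub_eq_zero.mp this

theorem coeff_simple_self {γ : V} (hγ : γ ∈ R.simples) : R.coeff γ γ = 1 := by
  classical
  exact R.coeff_eq_of_eq_sum (c := fun γ' => if γ' = γ then 1 else 0) (R.simples_mem γ hγ)
    (by simp [ite_smul, hγ]) hγ |>.trans (if_pos rfl)

theorem coeff_simple_of_ne {γ γ' : V} (hγ : γ ∈ R.simples) (hγ' : γ' ∈ R.simples)
    (hne : γ' ≠ γ) : R.coeff γ γ' = 0 := by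
  classical
  exact R.coeff_eq_of_eq_sum (c := fun γ' => if γ' = γ then 1 else 0) (R.simples_mem γ hγ)
    (by simp [ite_smul, hγ]) hγ' |>.trans (if_neg hne)

theorem coeff_neg {α : V} (hα : α ∈ R.roots) {γ : V} (hγ : γ ∈ R.simples) :
    R.coeff (-α) γ = -R.coeff α γ :=
  R.coeff_eq_of_eq_sum (c := fun γ => -R.coeff α γ) (R.neg_mem α hα)
    (by simp only [neg_smul, sum_neg_distrib, ← R.coeff_spec α hα]) hγ

theorem coeff_add {β δ : V} (hβ : β ∈ R.roots) (hδ : δ ∈ R.roots) (hβδ : β + δ ∈ R.roots)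
    {γ : V} (hγ : γ ∈ R.simples) : R.coeff (β + δ) γ = R.coeff β γ + R.coeff δ γ :=
  R.coeff_eq_of_eq_sum (c := fun γ => R.coeff β γ + R.coeff δ γ) hβδ
    (by simp only [add_smul, sum_add_distrib, ← R.coeff_spec β hβ, ← R.coeff_spec δ hδ]) hγ

theorem coeff_sub_zsmul_self {δ γ : V} (hδ : δ ∈ R.roots) (hγ : γ ∈ R.simples) {n : ℤ}
    (hmem : δ - n • γ ∈ R.roots) : R.coeff (δ - n • γ) γ = R.coeff δ γ - n := by
  classical
  have := R.coeff_eq_of_eq_sum (c := fun γ' => R.coeff δ γ' - if γ' = γ then n else 0) hmem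
    (by simp [sub_smul, ite_smul, hγ, ← R.coeff_spec δ hδ]) hγ
  simpa using this

theorem coeff_sub_zsmul_of_ne {δ γ : V} (hδ : δ ∈ R.roots) (hγ : γ ∈ R.simples) {n : ℤ}
    (hmem : δ - n • γ ∈ R.roots) {γ' : V} (hγ' : γ' ∈ R.simples) (hne : γ' ≠ γ) :
    R.coeff (δ - n • γ) γ' = R.coeff δ γ' := by
  classical
  have := R.coeff_eq_of_eq_sum (c := fun γ' => R.coeff δ γ' - if γ' = γ then n else 0) hmem
    (by simp [sub_smul, ite_smul, hγ, ← R.coeff_spec δ hδ]) hγ'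
  simpa [hne] using this

theorem mem_pos_of_coeff_pos {α γ : V} (hα : α ∈ R.roots) (hγ : γ ∈ R.simples)
    (h : 0 < R.coeff α γ) : α ∈ R.pos :=
  ⟨hα, (R.coeff_sign α hα).resolve_right fun hle => (hle γ hγ).not_gt h⟩

theorem neg_simple_notMem_pos {γ : V} (hγ : γ ∈ R.simples) : -γ ∉ R.pos := fun h => by
  have := h.2 γ hγ
  rw [R.coeff_neg (R.simples_mem γ hγ) hγ, R.coeff_simple_self hγ] at this
  omega

theorem height_nonneg {α : V} (hα : α ∈ R.pos) : 0 ≤ R.height α :=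
  sum_nonneg hα.2

theorem inner_self_pos {α : V} (hα : α ∈ R.roots) : 0 < ⟪α, α⟫_ℝ :=
  real_inner_self_pos.mpr (R.ne_zero α hα)

theorem sub_mem_roots_of_inner_pos {α β : V} (hα : α ∈ R.roots) (hβ : β ∈ R.roots)
    (hpos : 0 < ⟪α, β⟫_ℝ) (hne : α ≠ β) : α - β ∈ R.roots := by
  obtain ⟨n, hn⟩ := R.cartan_int β hβ α hα
  obtain ⟨m, hm⟩ := R.cartan_int α hα β hβ
  have hαα := R.inner_self_pos hα
  have hββ := R.inner_self_pos hβ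
  rw [real_inner_comm] at hn
  have hn0 : 0 < n := by exact_mod_cast hn ▸ (by positivity : 0 < 2 * ⟪α, β⟫_ℝ / ⟪β, β⟫_ℝ)
  have hm0 : 0 < m := by exact_mod_cast hm ▸ (by positivity : 0 < 2 * ⟪α, β⟫_ℝ / ⟪α, α⟫_ℝ)
  by_cases hn1 : n = 1
  · have := R.reflect_mem β hβ α hα
    rwa [real_inner_comm, hn, hn1, Int.cast_one, one_smul] at this
  by_cases hm1 : m = 1
  · have := R.neg_mem _ (R.reflect_mem α hα β hβ)
    rwa [hm, hm1, Int.cast_one, one_smul, neg_sub] at this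
  -- Cauchy–Schwarz bounds the product of the two Cartan integers by 4
  have hnm : (n * m : ℝ) ≤ 4 := by
    rw [← hn, ← hm, div_mul_div_comm, div_le_iff₀ (by positivity)]
    nlinarith [real_inner_mul_inner_self_le α β]
  have hnm' : n * m ≤ 4 := by exact_mod_cast hnm
  have hn2 : 2 ≤ n := by omega
  have hm2 : 2 ≤ m := by omega
  obtain ⟨rfl, rfl⟩ : n = 2 ∧ m = 2 := by constructor <;> nlinarith
  rw [div_eq_iff hββ.ne'] at hn
  rw [div_eq_iff hαα.ne'] at hm
  refine absurd (sub_eq_zero.mp (inner_self_eq_zero (𝕜 := ℝ) |>.mp ?_)) hne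
  rw [inner_sub_sub_self]
  push_cast at hn hm
  linarith [real_inner_comm α β]

theorem eq_one_of_zsmul_mem_roots {γ : V} (hγ : γ ∈ R.roots) {k : ℤ} (hk : 0 < k)
    (hkγ : k • γ ∈ R.roots) : k = 1 := by
  obtain ⟨n, hn⟩ := R.cartan_int (k • γ) hkγ γ hγ
  have hγγ := R.inner_self_pos hγ
  have hnk : (n * k : ℝ) = 2 := by
    rw [← hn]
    simp only [← Int.cast_smul_eq_zsmul ℝ, real_inner_smul_left, real_inner_smul_right]
    field_simp
  have hnk' : n * k = 2 := by exact_mod_cast hnk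
  have hk2 : k ≤ 2 := Int.le_of_dvd two_pos ⟨n, by linarith⟩
  interval_cases k
  · rfl
  · exact absurd (by simpa [← Int.cast_smul_eq_zsmul ℝ] using hkγ) (R.reduced γ hγ)

theorem eq_of_coeff_eq_zero_of_ne {δ γ : V} (hδ : δ ∈ R.pos) (hγ : γ ∈ R.simples)
    (h : ∀ γ' ∈ R.simples, γ' ≠ γ → R.coeff δ γ' = 0) : δ = γ := by
  have hδγ : δ = R.coeff δ γ • γ := by
    conv_lhs => rw [R.coeff_spec δ hδ.1]
    exact sum_eq_single_of_mem γ hγ fun γ' hγ' hne => by simp [h γ' hγ' hne]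
  have hk : 0 < R.coeff δ γ := by
    refine (hδ.2 γ hγ).lt_of_ne fun h0 => R.ne_zero δ hδ.1 ?_
    rw [hδγ, ← h0, zero_smul]
  have := R.eq_one_of_zsmul_mem_roots (R.simples_mem γ hγ) hk (hδγ ▸ hδ.1)
  rw [hδγ, this, one_smul]

theorem exists_reflection_eq_sub_zsmul {γ δ : V} (hγ : γ ∈ R.roots) (hδ : δ ∈ R.roots) :
    ∃ n : ℤ, 2 * ⟪γ, δ⟫_ℝ / ⟪γ, γ⟫_ℝ = n ∧ (ℝ ∙ γ)ᗮ.reflection δ = δ - n • γ := by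
  obtain ⟨n, hn⟩ := R.cartan_int γ hγ δ hδ
  refine ⟨n, hn, ?_⟩
  rw [Submodule.reflection_orthogonalComplement_singleton_apply, hn, Int.cast_smul_eq_zsmul]

theorem reflection_mem_roots {γ δ : V} (hγ : γ ∈ R.roots) (hδ : δ ∈ R.roots) :
    (ℝ ∙ γ)ᗮ.reflection δ ∈ R.roots := by
  rw [Submodule.reflection_orthogonalComplement_singleton_apply]
  exact R.reflect_mem γ hγ δ hδ

theorem coeff_reflection_of_ne {γ δ γ' : V} (hγ : γ ∈ R.simples) (hδ : δ ∈ R.roots)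
    (hγ' : γ' ∈ R.simples) (hne : γ' ≠ γ) :
    R.coeff ((ℝ ∙ γ)ᗮ.reflection δ) γ' = R.coeff δ γ' := by
  obtain ⟨n, -, hn⟩ := R.exists_reflection_eq_sub_zsmul (R.simples_mem γ hγ) hδ
  have hmem := R.reflection_mem_roots (R.simples_mem γ hγ) hδ
  rw [hn] at hmem ⊢
  exact R.coeff_sub_zsmul_of_ne hδ hγ hmem hγ' hne

theorem reflection_mem_pos {γ δ : V} (hγ : γ ∈ R.simples) (hδ : δ ∈ R.pos) (hne : δ ≠ γ) :
    (ℝ ∙ γ)ᗮ.reflection δ ∈ R.pos := by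
  obtain ⟨γ', hγ', hγ'γ, hδγ'⟩ : ∃ γ' ∈ R.simples, γ' ≠ γ ∧ R.coeff δ γ' ≠ 0 := by
    by_contra! h
    exact hne (R.eq_of_coeff_eq_zero_of_ne hδ hγ h)
  refine R.mem_pos_of_coeff_pos (R.reflection_mem_roots (R.simples_mem γ hγ) hδ.1) hγ' ?_
  rw [R.coeff_reflection_of_ne hγ hδ.1 hγ' hγ'γ]
  exact (hδ.2 γ' hγ').lt_of_ne' hδγ'

theorem reflection_ne_of_mem_pos {γ δ : V} (hγ : γ ∈ R.simples) (hδ : δ ∈ R.pos) :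
    (ℝ ∙ γ)ᗮ.reflection δ ≠ γ := by
  intro h
  have hδγ : δ = -γ := by
    rw [← Submodule.reflection_reflection (ℝ ∙ γ)ᗮ δ, h,
      Submodule.reflection_orthogonalComplement_singleton_eq_neg]
  exact R.neg_simple_notMem_pos hγ (hδγ ▸ hδ)

theorem exists_simple_coeff_pos_inner_pos {α : V} (hα : α ∈ R.pos) :
    ∃ γ ∈ R.simples, 0 < R.coeff α γ ∧ 0 < ⟪γ, α⟫_ℝ := by
  have hαα : ∑ γ ∈ R.simples, (R.coeff α γ : ℝ) * ⟪γ, α⟫_ℝ = ⟪α, α⟫_ℝ := by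
    simp only [← real_inner_smul_left, ← sum_inner, Int.cast_smul_eq_zsmul, ← R.coeff_spec α hα.1]
  have hsum : ∑ γ ∈ R.simples, (0 : ℝ) < ∑ γ ∈ R.simples, (R.coeff α γ : ℝ) * ⟪γ, α⟫_ℝ := by
    rw [sum_const_zero, hαα]
    exact R.inner_self_pos hα.1
  obtain ⟨γ, hγ, hpos⟩ := exists_lt_of_sum_lt hsum
  have hc : (0 : ℝ) ≤ R.coeff α γ := by exact_mod_cast hα.2 γ hγ
  obtain ⟨hc, hi⟩ := (pos_and_pos_or_neg_and_neg_of_mul_pos hpos).resolve_right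
    fun h => (hc.not_gt h.1)
  exact ⟨γ, hγ, by exact_mod_cast hc, hi⟩

theorem sub_mem_pos_of_inner_pos {α γ γ' : V} (hα : α ∈ R.pos) (hγ : γ ∈ R.simples)
    (hinner : 0 < ⟪γ, α⟫_ℝ) (hγ' : γ' ∈ R.simples) (hne : γ' ≠ γ) (hαγ' : 0 < R.coeff α γ') :
    α - γ ∈ R.pos := by
  have hγr := R.simples_mem γ hγ
  have hαγ : α ≠ γ := by
    rintro rfl
    exact hαγ'.ne' (R.coeff_simple_of_ne hγ hγ' hne)
  have hsub := R.sub_mem_roots_of_inner_pos hα.1 hγr (real_inner_comm γ α ▸ hinner) hαγ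
  refine R.mem_pos_of_coeff_pos hsub hγ' ?_
  rwa [← one_zsmul γ, R.coeff_sub_zsmul_of_ne hα.1 hγ (by rwa [one_zsmul]) hγ' hne]

theorem height_sub_zsmul {δ γ : V} (hδ : δ ∈ R.roots) (hγ : γ ∈ R.simples) {n : ℤ}
    (hmem : δ - n • γ ∈ R.roots) : R.height (δ - n • γ) = R.height δ - n := by
  classical
  rw [height, height, ← add_sum_erase _ _ hγ, ← add_sum_erase _ _ hγ,
    R.coeff_sub_zsmul_self hδ hγ hmem,
    sum_congr rfl fun γ' hγ' => R.coeff_sub_zsmul_of_ne hδ hγ hmem (mem_of_mem_erase hγ')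
      (ne_of_mem_erase hγ')]
  ring

theorem height_reflection_lt {γ δ : V} (hγ : γ ∈ R.simples) (hδ : δ ∈ R.roots)
    (hinner : 0 < ⟪γ, δ⟫_ℝ) : R.height ((ℝ ∙ γ)ᗮ.reflection δ) < R.height δ := by
  have hγr := R.simples_mem γ hγ
  obtain ⟨n, hn, hrefl⟩ := R.exists_reflection_eq_sub_zsmul hγr hδ
  have hn0 : (0 : ℝ) < n := hn ▸ div_pos (by positivity) (R.inner_self_pos hγr)
  have hmem := R.reflection_mem_roots hγr hδ
  rw [hrefl] at hmem ⊢
  rw [R.height_sub_zsmul hδ hγ hmem]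
  exact sub_lt_self _ (by exact_mod_cast hn0)

theorem supp_subset_insert_of_coeff_eq [DecidableEq V] {α α' γ : V}
    (h : ∀ γ' ∈ R.simples, γ' ≠ γ → R.coeff α' γ' = R.coeff α γ') :
    R.Supp α ⊆ insert γ (R.Supp α') := by
  intro γ' hγ'
  obtain ⟨hs, hc⟩ := mem_filter.mp hγ'
  rcases eq_or_ne γ' γ with rfl | hne
  · exact mem_insert_self _ _
  · exact mem_insert_of_mem (mem_filter.mpr ⟨hs, by rwa [h γ' hs hne]⟩)

def decomps (α : V) : Set (Sym2 V) :=
  {z : Sym2 V | ∃ β ∈ R.pos, ∃ δ ∈ R.pos, z = s(β, δ) ∧ β + δ = α}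

theorem numDecomp_eq_ncard_decomps (α : V) : R.numDecomp α = (R.decomps α).ncard := rfl

theorem decomps_finite (α : V) : (R.decomps α).Finite := by
  refine ((R.finite.prod R.finite).image fun p : V × V => s(p.1, p.2)).subset ?_
  rintro z ⟨β, hβ, δ, hδ, rfl, -⟩
  exact ⟨(β, δ), ⟨hβ.1, hδ.1⟩, rfl⟩

theorem eq_of_mem_decomps_of_mem {α γ : V} {z : Sym2 V} (hz : z ∈ R.decomps α) (hγ : γ ∈ z) :
    z = s(γ, α - γ) := by
  obtain ⟨β, -, δ, -, rfl, rfl⟩ := hz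
  rcases Sym2.mem_iff.mp hγ with rfl | rfl
  · rw [add_sub_cancel_left]
  · rw [add_sub_cancel_right, Sym2.eq_swap]

theorem coeff_pos_of_mem_decomps {α γ : V} (hα : α ∈ R.roots) (hγ : γ ∈ R.simples)
    {z : Sym2 V} (hz : z ∈ R.decomps α) (hγz : γ ∈ z) : 0 < R.coeff α γ := by
  obtain ⟨β, hβ, δ, hδ, rfl, rfl⟩ := hz
  rw [R.coeff_add hβ.1 hδ.1 hα hγ]
  have := hβ.2 γ hγ
  have := hδ.2 γ hγ
  rcases Sym2.mem_iff.mp hγz with rfl | rfl <;> rw [R.coeff_simple_self hγ] <;> omega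

theorem ncard_decomps_inter_le_one (α γ : V) : (R.decomps α ∩ {z | γ ∈ z}).ncard ≤ 1 := by
  refine (Set.ncard_le_ncard (t := {s(γ, α - γ)}) ?_).trans (Set.ncard_singleton _).le
  exact fun z ⟨hz, hγz⟩ => R.eq_of_mem_decomps_of_mem hz hγz

theorem ncard_decomps_diff_le_reflection {γ : V} (hγ : γ ∈ R.simples) (α : V) :
    (R.decomps α \ {z | γ ∈ z}).ncard ≤
      (R.decomps ((ℝ ∙ γ)ᗮ.reflection α) \ {z | γ ∈ z}).ncard := by
  set σ := (ℝ ∙ γ)ᗮ.reflection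
  refine Set.ncard_le_ncard_of_injOn (Sym2.map σ) ?_
    (Sym2.map.injective σ.injective).injOn ((R.decomps_finite _).sdiff)
  rintro _ ⟨⟨β, hβ, δ, hδ, rfl, rfl⟩, hγz⟩
  have hβγ : β ≠ γ := fun h => hγz (h ▸ Sym2.mem_mk_left β δ)
  have hδγ : δ ≠ γ := fun h => hγz (h ▸ Sym2.mem_mk_right β δ)
  refine ⟨⟨σ β, R.reflection_mem_pos hγ hβ hβγ, σ δ, R.reflection_mem_pos hγ hδ hδγ,
    Sym2.map_mk .., (map_add σ β δ).symm⟩, fun h => ?_⟩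
  rcases Sym2.mem_iff.mp (Sym2.map_mk σ β δ ▸ h) with h | h
  · exact R.reflection_ne_of_mem_pos hγ hβ h.symm
  · exact R.reflection_ne_of_mem_pos hγ hδ h.symm

theorem numDecomp_reflection_add_one_le {α γ : V} (hγ : γ ∈ R.simples) (hsub : α - γ ∈ R.pos) :
    R.numDecomp ((ℝ ∙ γ)ᗮ.reflection α) + 1 ≤
      R.numDecomp α + (R.decomps ((ℝ ∙ γ)ᗮ.reflection α) ∩ {z | γ ∈ z}).ncard := by
  have hγα : R.decomps α ∩ {z | γ ∈ z} = {s(γ, α - γ)} := by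
    refine Set.Subset.antisymm (fun z ⟨hz, hγz⟩ => R.eq_of_mem_decomps_of_mem hz hγz) ?_
    rintro _ rfl
    refine ⟨⟨γ, R.mem_pos_of_coeff_pos (R.simples_mem γ hγ) hγ ?_, α - γ, hsub, rfl,
      add_sub_cancel γ α⟩, Sym2.mem_mk_left γ _⟩
    rw [R.coeff_simple_self hγ]
    exact one_pos
  have hdiff := R.ncard_decomps_diff_le_reflection hγ ((ℝ ∙ γ)ᗮ.reflection α)
  rw [Submodule.reflection_reflection] at hdiff
  have hα := Set.ncard_inter_add_ncard_sdiff_eq_ncard (R.decomps α) {z | γ ∈ z}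
    (R.decomps_finite α)
  have hα' := Set.ncard_inter_add_ncard_sdiff_eq_ncard
    (R.decomps ((ℝ ∙ γ)ᗮ.reflection α)) {z | γ ∈ z} (R.decomps_finite _)
  rw [hγα, Set.ncard_singleton] at hα
  rw [numDecomp_eq_ncard_decomps, numDecomp_eq_ncard_decomps]
  omega

theorem card_supp_sub_numDecomp_le_reflection {α γ : V} (hα : α ∈ R.pos) (hγ : γ ∈ R.simples)
    (hsub : α - γ ∈ R.pos) :
    (#(R.Supp α) : ℤ) - R.numDecomp α ≤
      #(R.Supp ((ℝ ∙ γ)ᗮ.reflection α)) - R.numDecomp ((ℝ ∙ γ)ᗮ.reflection α) := by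
  classical
  have hdecomps := R.numDecomp_reflection_add_one_le hγ hsub
  set α' := (ℝ ∙ γ)ᗮ.reflection α
  have hα' : α' ∈ R.roots := R.reflection_mem_roots (R.simples_mem γ hγ) hα.1
  have hsupp : R.Supp α ⊆ insert γ (R.Supp α') :=
    R.supp_subset_insert_of_coeff_eq fun γ' hγ' hne => R.coeff_reflection_of_ne hγ hα.1 hγ' hne
  by_cases hγα' : γ ∈ R.Supp α'
  · have := card_le_card (insert_eq_of_mem hγα' ▸ hsupp)
    have := R.ncard_decomps_inter_le_one α' γ
    omega
  · have hcoeff : R.coeff α' γ = 0 := by simpa [Supp, hγ] using hγα'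
    have hempty : (R.decomps α' ∩ {z | γ ∈ z}).ncard = 0 := by
      rw [Set.ncard_eq_zero ((R.decomps_finite _).inter_of_left _)]
      exact Set.eq_empty_of_forall_notMem fun z ⟨hz, hγz⟩ =>
        (R.coeff_pos_of_mem_decomps hα' hγ hz hγz).ne' hcoeff
    have := (card_le_card hsupp).trans (card_insert_le _ _)
    omega

theorem exists_simple_sub_mem_pos_inner_pos {α : V} (hα : α ∈ R.pos) (hsupp : 1 < #(R.Supp α)) :
    ∃ γ ∈ R.simples, α - γ ∈ R.pos ∧ 0 < ⟪γ, α⟫_ℝ := by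
  obtain ⟨γ, hγ, -, hinner⟩ := R.exists_simple_coeff_pos_inner_pos hα
  obtain ⟨γ', hγ', hne⟩ := exists_mem_ne hsupp γ
  obtain ⟨hγ's, hcoeff⟩ := mem_filter.mp hγ'
  exact ⟨γ, hγ, R.sub_mem_pos_of_inner_pos hα hγ hinner hγ's hne
    ((hα.2 γ' hγ's).lt_of_ne' hcoeff), hinner⟩

end RootSystemData

/-- In any reduced root system, the number `s(α)` of unordered representations of a
positive root `α` as a sum of two positive roots satisfies `s(α) ≥ |Supp α| - 1`. -/
theorem card_supp_sub_one_le_numDecomp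
    {V : Type} [NormedAddCommGroup V] [InnerProductSpace ℝ V]
    (R : RootSystemData V) :
    ∀ α ∈ R.pos, ((R.Supp α).card : ℤ) - 1 ≤ (R.numDecomp α : ℤ) := by
  intro α hα
  induction hN : (R.height α).toNat using Nat.strong_induction_on generalizing α with
  | _ N ih =>
  rcases le_or_gt #(R.Supp α) 1 with hle | hlt
  · omega
  obtain ⟨γ, hγ, hsub, hinner⟩ := R.exists_simple_sub_mem_pos_inner_pos hα hlt
  have hα' := R.reflection_mem_pos hγ hα (sub_ne_zero.mp (R.ne_zero _ hsub.1))
  have hheight := R.height_reflection_lt hγ hα.1 hinner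
  have := R.height_nonneg hα'
  have := ih _ (by omega) _ hα' rfl
  have := R.card_supp_sub_numDecomp_le_reflection hα hγ hsub
  omega
end

section
/- Let $H$ be a connected solvable spherical subgroup of $G$ standardly embedded in $B$, with active roots $\Psi$. If $\alpha$ is an active root and $\alpha = \beta + \gamma$ with $\beta, \gamma \in \Delta_+$, then exactly one of $\beta, \gamma$ is active. -/
open scoped InnerProductSpace

/-- The Lie-theoretic data attached to a connected solvable subgroup `H = S ⋉ N` of a
connected semisimple complex algebraic group `G`, standardly embedded in a Borel subgroup
`B = T ⋉ U`:
* the root system of `G` with respect to `T`, with the base determined by `B`;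
* the restriction map `τ : 𝔛(T) ⊗ ℚ → 𝔛(S) ⊗ ℚ` of characters from `T` to the maximal
  torus `S = H ∩ T` of `H` (modelled as a linear map of vector spaces, `W = 𝔛(S) ⊗ ℚ`);
* the nilpotent Lie algebra `L = 𝔲` of the maximal unipotent subgroup `U`, with its root
  space decomposition `𝔲 = ⨁_{α ∈ Δ₊} 𝔤_α`;
* the Lie algebra `𝔫 ⊆ 𝔲` of the unipotent radical `N = H ∩ U` of `H`, which is a
  subalgebra and is a sum of its `S`-weight components. -/
structure SphericalSetup (V : Type) [NormedAddCommGroup V] [InnerProductSpace ℝ V]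
    (W : Type) [AddCommGroup W] [Module ℝ W]
    (L : Type) [LieRing L] [LieAlgebra ℂ L] extends RootSystemData V where
  /-- restriction of characters from `T` to `S` -/
  τ : V →ₗ[ℝ] W
  /-- the root spaces `𝔤_α ⊆ 𝔲` -/
  g : V → Submodule ℂ L
  g_dim : ∀ α ∈ toRootSystemData.pos, Module.finrank ℂ (g α) = 1
  g_bot : ∀ α, α ∉ toRootSystemData.pos → g α = ⊥
  g_top : (⨆ α ∈ toRootSystemData.pos, g α) = (⊤ : Submodule ℂ L)
  bracket_mem : ∀ (α β : V), ∀ x ∈ g α, ∀ y ∈ g β, ⁅x, y⁆ ∈ g (α + β)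
  bracket_ne : ∀ α ∈ toRootSystemData.pos, ∀ β ∈ toRootSystemData.pos,
    α + β ∈ toRootSystemData.pos → ∃ x ∈ g α, ∃ y ∈ g β, ⁅x, y⁆ ≠ (0 : L)
  /-- the Lie algebra `𝔫` of the unipotent radical `N` of `H` -/
  n : Submodule ℂ L
  n_bracket : ∀ x ∈ n, ∀ y ∈ n, ⁅x, y⁆ ∈ n
  n_weight : n = ⨆ w : W, n ⊓ ⨆ α ∈ {a ∈ toRootSystemData.pos | τ a = w}, g α

namespace SphericalSetup

variable {V : Type} [NormedAddCommGroup V] [InnerProductSpace ℝ V]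
  {W : Type} [AddCommGroup W] [Module ℝ W]
  {L : Type} [LieRing L] [LieAlgebra ℂ L]

/-- The `S`-weight subspace `𝔲_w ⊆ 𝔲` of weight `w`. -/
def uSp (S : SphericalSetup V W L) (w : W) : Submodule ℂ L :=
  ⨆ α ∈ {a ∈ S.pos | S.τ a = w}, S.g α

/-- `c_w`: the codimension of `𝔫_w = 𝔫 ∩ 𝔲_w` in `𝔲_w`. -/
noncomputable def c (S : SphericalSetup V W L) (w : W) : ℕ :=
  Module.finrank ℂ (S.uSp w) - Module.finrank ℂ ↥(S.n ⊓ S.uSp w)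

/-- The sphericity of `H` in `G`, via the criterion of Theorem `solvable_spherical`:
`c_w ≤ 1` for every weight `w`, and the weights `w` with `c_w = 1` are linearly
independent in `𝔛(S) ⊗ ℚ`. -/
def Spherical (S : SphericalSetup V W L) : Prop :=
  (∀ w : W, S.c w ≤ 1) ∧
    LinearIndependent ℝ (fun w : {w : W // S.c w = 1} => (w : W))

/-- The set `Ψ` of active roots: positive roots `α` with `𝔤_α ⊄ 𝔫`. -/
def active (S : SphericalSetup V W L) : Set V :=
  {α ∈ S.pos | ¬ S.g α ≤ S.n}

/-- The family `F(α)` of active roots generated by an active root `α`: the root `α`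
together with all active roots subordinate to it. -/
def family (S : SphericalSetup V W L) (α : V) : Set V :=
  insert α {β ∈ S.active | α - β ∈ S.pos}

end SphericalSetup

/-!
If neither `β` nor `γ` is active, then `𝔤_β, 𝔤_γ ⊆ 𝔫`, and since `𝔤_{β+γ}` is the line spanned
by a nonzero bracket `[x_β, x_γ]`, also `𝔤_{β+γ} ⊆ 𝔫`. If both are active, then sphericity gives
`c_w = 1` for the three weights `τ β`, `τ γ` and `τ (β + γ) = τ β + τ γ`, which contradicts the
linear independence of the weights with `c_w = 1`.
-/

theorem LinearIndepOn.add_notMem {K M : Type*} [DivisionRing K] [AddCommGroup M] [Module K M]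
    {s : Set M} (hs : LinearIndepOn K id s) {b c : M} (hb : b ∈ s) (hc : c ∈ s) :
    b + c ∉ s := by
  intro hbc
  by_cases hcb : b + c = b
  · exact hs.ne_zero hc (by simpa using hcb)
  by_cases hbc' : b + c = c
  · exact hs.ne_zero hb (by simpa using hbc')
  refine hs.notMem_span hbc ?_
  rw [Set.image_id]
  exact add_mem (Submodule.subset_span ⟨hb, Ne.symm hcb⟩)
    (Submodule.subset_span ⟨hc, Ne.symm hbc'⟩)

namespace SphericalSetup

variable {V : Type} [NormedAddCommGroup V] [InnerProductSpace ℝ V]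
  {W : Type} [AddCommGroup W] [Module ℝ W]
  {L : Type} [LieRing L] [LieAlgebra ℂ L]

theorem g_le_uSp (S : SphericalSetup V W L) {α : V} (hα : α ∈ S.pos) :
    S.g α ≤ S.uSp (S.τ α) :=
  le_iSup₂ (f := fun a (_ : a ∈ {a ∈ S.pos | S.τ a = S.τ α}) => S.g a) α ⟨hα, rfl⟩

theorem g_add_le_n (S : SphericalSetup V W L) {β γ : V} (hβ : β ∈ S.pos) (hγ : γ ∈ S.pos)
    (hβγ : β + γ ∈ S.pos) (hβn : S.g β ≤ S.n) (hγn : S.g γ ≤ S.n) : S.g (β + γ) ≤ S.n := by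
  obtain ⟨x, hx, y, hy, hxy⟩ := S.bracket_ne β hβ γ hγ hβγ
  rw [eq_span_singleton_of_mem_of_finrank_eq_one (S.g_dim _ hβγ)
    (S.bracket_mem β γ x hx y hy) hxy, Submodule.span_singleton_le_iff_mem]
  exact S.n_bracket x (hβn hx) y (hγn hy)

theorem mem_active_or_of_add_mem_active (S : SphericalSetup V W L) {β γ : V}
    (hβ : β ∈ S.pos) (hγ : γ ∈ S.pos) (hα : β + γ ∈ S.active) :
    β ∈ S.active ∨ γ ∈ S.active := by
  by_contra! h
  exact hα.2 (S.g_add_le_n hβ hγ hα.1 (not_not.mp fun hn => h.1 ⟨hβ, hn⟩)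
    (not_not.mp fun hn => h.2 ⟨hγ, hn⟩))

theorem Spherical.c_eq_one_of_mem_active [FiniteDimensional ℂ L] {S : SphericalSetup V W L}
    (hS : S.Spherical) {α : V} (hα : α ∈ S.active) : S.c (S.τ α) = 1 := by
  refine le_antisymm (hS.1 _) (Nat.one_le_iff_ne_zero.mpr fun h0 => hα.2 ?_)
  have hnu : S.n ⊓ S.uSp (S.τ α) = S.uSp (S.τ α) :=
    Submodule.eq_of_le_of_finrank_le inf_le_right (Nat.sub_eq_zero_iff_le.mp h0)
  exact (S.g_le_uSp hα.1).trans (inf_eq_right.mp hnu)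

theorem Spherical.not_and_mem_active_of_add_mem_active [FiniteDimensional ℂ L]
    {S : SphericalSetup V W L} (hS : S.Spherical) {β γ : V} (hα : β + γ ∈ S.active) :
    ¬(β ∈ S.active ∧ γ ∈ S.active) := by
  rintro ⟨hβ, hγ⟩
  have hind : LinearIndepOn ℝ id {w | S.c w = 1} := hS.2
  exact hind.add_notMem (hS.c_eq_one_of_mem_active hβ) (hS.c_eq_one_of_mem_active hγ)
    (map_add S.τ β γ ▸ hS.c_eq_one_of_mem_active hα)

end SphericalSetup

/-- Let `H` be a connected solvable spherical subgroup of `G` standardly embedded in `B`,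
with set of active roots `Ψ`.  If `α` is an active root and `α = β + γ` with positive
roots `β, γ`, then exactly one of `β, γ` is active. -/
theorem xor_active_of_sum
    {V : Type} [NormedAddCommGroup V] [InnerProductSpace ℝ V]
    {W : Type} [AddCommGroup W] [Module ℝ W]
    {L : Type} [LieRing L] [LieAlgebra ℂ L] [FiniteDimensional ℂ L]
    (S : SphericalSetup V W L) (hS : S.Spherical)
    {α β γ : V} (hα : α ∈ S.active) (hβ : β ∈ S.pos) (hγ : γ ∈ S.pos)
    (hsum : α = β + γ) :
    Xor' (β ∈ S.active) (γ ∈ S.active) := by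
  subst hsum
  exact (xor_iff_or_and_not_and _ _).mpr
    ⟨S.mem_active_or_of_add_mem_active hβ hγ hα, hS.not_and_mem_active_of_add_mem_active hα⟩
end
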